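/- Let A be a right coherent ring and X a contravariantly finite subcategory of mod-A containing all finitely generated projective A-modules. Then for every M in mod-A there exists an exact sequence 0 → K_M → θ_λ(M) →(γ_M) θ_ρ(M) → L_M → 0 in mod-X in which both K_M and L_M belong to mod_0-X. -/

import Mathlib

/- Common setup: right modules over a ring are realized as left modules over the opposite
ring; `mod-X` (finitely presented additive functors on a subcategory `X` of `mod-Λ`) is
realized inside the abelian category of contravariant `AddCommGrp`-valued functors on `X`. -/

open CategoryTheory CategoryTheory.Limits Opposite

universe u

noncomputable section

namespace RelAus

attribute [local instance] CategoryTheory.Abelian.hasFiniteBiproducts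

/-- `N` is a direct summand of `M`. -/
def IsDirectSummand {C : Type*} [Category C] (N M : C) : Prop :=
  ∃ (i : N ⟶ M) (r : M ⟶ N), i ≫ r = 𝟙 N

/-- `M ∈ add Xbar`: `M` is a direct summand of a finite direct sum of copies of `Xbar`. -/
def InAdd {R : Type u} [Ring R] (Xbar M : ModuleCat.{u} R) : Prop :=
  ∃ n : ℕ, IsDirectSummand M (ModuleCat.of R (Fin n → Xbar))

/-- `Xbar` is an additive generator of the class `𝒮` of modules: `𝒮 = add Xbar`. -/
def IsAddGen {R : Type u} [Ring R] (𝒮 : Set (ModuleCat.{u} R)) (Xbar : ModuleCat.{u} R) : Prop :=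
  Xbar ∈ 𝒮 ∧ ∀ M : ModuleCat.{u} R, M ∈ 𝒮 ↔ InAdd Xbar M

/-- An object of an additive category is indecomposable if it is nonzero and in any biproduct
decomposition one of the two factors is zero. -/
def IsIndecObj {C : Type*} [Category C] [Preadditive C] [HasBinaryBiproducts C] (N : C) : Prop :=
  ¬ IsZero N ∧ ∀ A B : C, Nonempty (N ≅ A ⊞ B) → IsZero A ∨ IsZero B

/-- The cardinality of the set of isomorphism classes of indecomposable direct summands
of the module `T`. -/
def numIndecSummands {R : Type u} [Ring R] (T : ModuleCat.{u} R) : Cardinal :=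
  Cardinal.mk {q : _root_.Quotient (isIsomorphicSetoid (ModuleCat.{u} R)) //
    ∃ N : ModuleCat.{u} R, Quotient.mk (isIsomorphicSetoid _) N = q ∧
      IsIndecObj N ∧ IsDirectSummand N T}

/-- The cardinality of the set of isomorphism classes of indecomposable (finitely generated)
projective `R`-modules. -/
def numIndecProj (R : Type u) [Ring R] : Cardinal :=
  Cardinal.mk {q : _root_.Quotient (isIsomorphicSetoid (ModuleCat.{u} R)) //
    ∃ N : ModuleCat.{u} R, Quotient.mk (isIsomorphicSetoid _) N = q ∧
      IsIndecObj N ∧ Projective N ∧ Module.Finite R N}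

/-- `T` has projective dimension at most one: there is a short exact sequence
`0 → P₁ → P₀ → T → 0` with `P₁`, `P₀` projective. -/
def ModPdLeOne {R : Type u} [Ring R] (T : ModuleCat.{u} R) : Prop :=
  ∃ (P₁ P₀ : ModuleCat.{u} R) (i : P₁ ⟶ P₀) (p : P₀ ⟶ T) (w : i ≫ p = 0),
    Projective P₁ ∧ Projective P₀ ∧ (ShortComplex.mk i p w).ShortExact

/-- `T` has injective dimension at most one: there is a short exact sequence
`0 → T → I₀ → I₁ → 0` with `I₀`, `I₁` injective. -/
def ModIdLeOne {R : Type u} [Ring R] (T : ModuleCat.{u} R) : Prop :=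
  ∃ (I₀ I₁ : ModuleCat.{u} R) (i : T ⟶ I₀) (p : I₀ ⟶ I₁) (w : i ≫ p = 0),
    Injective I₀ ∧ Injective I₁ ∧ (ShortComplex.mk i p w).ShortExact

/-- `T` is rigid, i.e. `Ext¹_R(T,T) = 0`: every self-extension of `T` splits. -/
def ModRigid {R : Type u} [Ring R] (T : ModuleCat.{u} R) : Prop :=
  ∀ (E : ModuleCat.{u} R) (i : T ⟶ E) (p : E ⟶ T) (w : i ≫ p = 0),
    (ShortComplex.mk i p w).ShortExact → Nonempty (ShortComplex.mk i p w).Splitting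

/-- `T` is a tilting `R`-module: `pd T ≤ 1`, `Ext¹_R(T,T) = 0`, and the number of isomorphism
classes of indecomposable direct summands of `T` equals the number of isomorphism classes of
indecomposable projective `R`-modules. -/
structure IsTiltingModule {R : Type u} [Ring R] (T : ModuleCat.{u} R) : Prop where
  pd_le_one : ModPdLeOne T
  rigid : ModRigid T
  summands : numIndecSummands T = numIndecProj R

/-- `T` is a cotilting `R`-module: `id T ≤ 1`, `Ext¹_R(T,T) = 0`, and the same counting
condition as for tilting modules. -/
structure IsCotiltingModule {R : Type u} [Ring R] (T : ModuleCat.{u} R) : Prop where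
  id_le_one : ModIdLeOne T
  rigid : ModRigid T
  summands : numIndecSummands T = numIndecProj R

/-- `M` is a (finitely generated) Gorenstein projective `R`-module: `M` is a syzygy of a
totally acyclic complex of finitely generated projective modules, i.e. of an acyclic complex
`P` of projectives such that `Hom_R(P, Q)` is acyclic for every projective `Q`. -/
def IsGProj {R : Type u} [Ring R] (M : ModuleCat.{u} R) : Prop :=
  ∃ P : CochainComplex (ModuleCat.{u} R) ℤ,
    (∀ n, Projective (P.X n)) ∧ (∀ n, Module.Finite R (P.X n)) ∧
    (∀ n, P.ExactAt n) ∧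
    (∀ Q : ModuleCat.{u} R, Projective Q →
      ∀ n, (((preadditiveYoneda.obj Q).mapHomologicalComplex _).obj P.op).ExactAt n) ∧
    ∃ n : ℤ, Nonempty (M ≅ kernel (P.d n (n + 1)))

/-- The class of finitely generated Gorenstein projective `R`-modules.  Applied to `R = Λᵐᵒᵖ`
this is `Gprj-Λ`, the Gorenstein projective right `Λ`-modules. -/
def GprjSet (R : Type u) [Ring R] : Set (ModuleCat.{u} R) :=
  {M | Module.Finite R M ∧ IsGProj M}

/-- The category of finitely generated `R`-modules. -/
abbrev fgMod (R : Type u) [Ring R] := ObjectProperty.FullSubcategory (fun M : ModuleCat.{u} R => Module.Finite R M)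

/-- `M` is basic: no indecomposable module occurs twice in a direct sum decomposition. -/
def IsBasic {R : Type u} [Ring R] (M : ModuleCat.{u} R) : Prop :=
  ∀ (N A : ModuleCat.{u} R), IsIndecObj N → ¬ Nonempty (M ≅ (N ⊞ N) ⊞ A)

/-- Two rings are Morita equivalent if their categories of finitely generated modules are
equivalent.  Applied to the opposite rings, this says that the categories of finitely
generated right modules are equivalent. -/
def MoritaEq (R S : Type u) [Ring R] [Ring S] : Prop :=
  Nonempty (fgMod R ≌ fgMod S)

/-- A ring `A` is right coherent: every finitely generated right ideal of `A` (i.e. left ideal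
of `Aᵐᵒᵖ`) is finitely presented as a right `A`-module. -/
def RightCoherent (A : Type u) [Ring A] : Prop :=
  ∀ I : Ideal Aᵐᵒᵖ, I.FG → Module.FinitePresentation Aᵐᵒᵖ I

/-- `Λ` is an (Iwanaga-)Gorenstein ring of G-dimension one: the injective dimension of `Λ`
as a right module over itself and as a left module over itself are both equal to `1`. -/
def GorensteinDimOne (Λ : Type u) [Ring Λ] : Prop :=
  (ModIdLeOne (ModuleCat.of Λᵐᵒᵖ Λ) ∧ ¬ Injective (ModuleCat.of Λᵐᵒᵖ Λ)) ∧
  (ModIdLeOne (ModuleCat.of Λ Λ) ∧ ¬ Injective (ModuleCat.of Λ Λ))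

variable {Λ : Type u} [Ring Λ]

/-- The category of right `Λ`-modules, realized as left modules over `Λᵐᵒᵖ`. -/
abbrev RMod (Λ : Type u) [Ring Λ] := ModuleCat.{u} Λᵐᵒᵖ

/-- Given the end `ε : Q ⟶ Xbar` of a projective presentation of `Xbar`, the evaluation
`T = ζ^X_{Xbar}(Xbar)` of the intermediate extension at `Xbar`: concretely, it is the set of
endomorphisms of `Xbar` that factor through `ε`, which is a right ideal of
`Γ = End_Λ(Xbar)`, i.e. a `Γᵐᵒᵖ`-submodule of `Γ` (right `Γ`-modules being realized as
`Γᵐᵒᵖ`-modules). -/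
def zetaEvalSub {Q Xbar : RMod Λ} (ε : Q ⟶ Xbar) :
    Submodule (End Xbar)ᵐᵒᵖ (End Xbar) where
  carrier := {g : End Xbar | ∃ h : Xbar ⟶ Q, h ≫ ε = g}
  add_mem' := by
    rintro a b ⟨h₁, rfl⟩ ⟨h₂, rfl⟩
    exact ⟨h₁ + h₂, by simp [Preadditive.add_comp]⟩
  zero_mem' := ⟨0, by simp⟩
  smul_mem' := by
    rintro e g ⟨h, rfl⟩
    exact ⟨e.unop ≫ h, by simp [Category.assoc]⟩

/-- `Xm` lies in `⊥Λ`, i.e. `Ext^i_Λ(Xm, Λ) = 0` for all `i ≥ 1`, where `Λ` is regarded as a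
right module over itself. -/
def MemPerp [HasExt.{u+1} (RMod Λ)] (Xm : RMod Λ) : Prop :=
  ∀ i : ℕ, 1 ≤ i → ∀ x : Abelian.Ext Xm (ModuleCat.of Λᵐᵒᵖ Λ) i, x = 0

/-- The standing hypotheses on a class `𝒳` of right `Λ`-modules: it consists of modules
belonging to `mod-Λ` (described by the predicate `memP`), it is additively closed and closed
under direct summands (hence a full additive subcategory of `mod-Λ` closed under summands),
it contains all the projective modules of `mod-Λ`, and it is contravariantly finite in
`mod-Λ`, i.e. every module in `mod-Λ` has a right `𝒳`-approximation. -/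
structure GoodSub (memP : RMod Λ → Prop) (𝒳 : Set (RMod Λ)) : Prop where
  mem_mod : ∀ M ∈ 𝒳, memP M
  sum_mem : ∀ M N : RMod Λ, M ∈ 𝒳 → N ∈ 𝒳 → ModuleCat.of Λᵐᵒᵖ (M × N) ∈ 𝒳
  summand_mem : ∀ M N : RMod Λ, M ∈ 𝒳 → IsDirectSummand N M → N ∈ 𝒳
  proj_mem : ∀ P : RMod Λ, memP P → Projective P → P ∈ 𝒳
  approx : ∀ M : RMod Λ, memP M → ∃ X₀ ∈ 𝒳, ∃ f : X₀ ⟶ M,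
    ∀ X' ∈ 𝒳, ∀ g : X' ⟶ M, ∃ h : X' ⟶ X₀, h ≫ f = g

/-- `𝒳` is closed under syzygies: for every short exact sequence `0 → Ω → P → X' → 0` with
`X' ∈ 𝒳` and `P` a finitely generated projective module, `Ω ∈ 𝒳`. -/
def ClosedUnderSyzygies (𝒳 : Set (RMod Λ)) : Prop :=
  ∀ (Ω P X' : RMod Λ), X' ∈ 𝒳 → Projective P → Module.Finite Λᵐᵒᵖ P →
    ∀ (i : Ω ⟶ P) (p : P ⟶ X') (w : i ≫ p = 0),
      (ShortComplex.mk i p w).ShortExact → Ω ∈ 𝒳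

/-- `𝒳` is closed under submodules. -/
def ClosedUnderSubmodules (𝒳 : Set (RMod Λ)) : Prop :=
  ∀ (N X' : RMod Λ), X' ∈ 𝒳 → ∀ i : N ⟶ X', Mono i → N ∈ 𝒳

section FunctorCategory

variable (𝒳 : Set (RMod Λ))

/-- The subcategory `X`, as a full subcategory of the category of right `Λ`-modules. -/
abbrev XCat := ObjectProperty.FullSubcategory (fun M : RMod Λ => M ∈ 𝒳)

/-- The ambient abelian category of contravariant `AddCommGrp`-valued functors on `X`;
`mod-X` is its full subcategory of finitely presented functors (see `FinPres`). -/
abbrev FunCat := (XCat 𝒳)ᵒᵖ ⥤ AddCommGrpCat.{u}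

/-- The restricted Yoneda functor `M ↦ Hom_Λ(-, M)|_X`.  On an arbitrary module `M` it
gives `θ_ρ(M)`; on objects of `X` it gives the representable functors, which are exactly the
projective objects of `mod-X`. -/
def resY : RMod Λ ⥤ FunCat 𝒳 :=
  preadditiveYoneda ⋙
    (Functor.whiskeringLeft (XCat 𝒳)ᵒᵖ (RMod Λ)ᵒᵖ AddCommGrpCat.{u}).obj (ObjectProperty.ι _).op

/-- `F` is a finitely presented functor on `X`, i.e. an object of `mod-X`: there is an exact
sequence `Hom(-,X₁)|_X ⟶ Hom(-,X₀)|_X ⟶ F ⟶ 0` with `X₁, X₀ ∈ 𝒳`. -/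
def FinPres (F : FunCat 𝒳) : Prop :=
  ∃ (X₁ X₀ : RMod Λ) (_ : X₁ ∈ 𝒳) (_ : X₀ ∈ 𝒳) (d : X₁ ⟶ X₀),
    Nonempty (F ≅ cokernel ((resY 𝒳).map d))

/-- `F` vanishes on all projective `Λ`-modules, i.e. `F` lies in `mod₀-X`. -/
def Vanish0 (F : FunCat 𝒳) : Prop :=
  ∀ P : XCat 𝒳, Projective P.obj → IsZero (F.obj (op P))

lemma resY_comp_zero {P Q M : RMod Λ} (d : P ⟶ Q) (ε : Q ⟶ M) (w : d ≫ ε = 0) :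
    (resY 𝒳).map d ≫ (resY 𝒳).map ε = 0 := by
  ext Z g
  erw [comp_apply]
  show (_ ≫ d) ≫ ε = (0 : ((resY 𝒳).obj M).obj Z)
  first
    | exact (Category.assoc _ _ _).trans (by rw [w, comp_zero])
    | (erw [Category.assoc, w, comp_zero]; rfl)
    | simp [w]

/-- Given a projective presentation `P ⟶ Q ⟶ M ⟶ 0` of `M`, the canonical natural map
`γ_M : θ_λ(M) ⟶ θ_ρ(M)` induced by the identity of `M`, where
`θ_λ(M) = coker(Hom(-,P)|_X → Hom(-,Q)|_X)` and `θ_ρ(M) = Hom(-,M)|_X`. -/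
def gammaMap {P Q M : RMod Λ} (d : P ⟶ Q) (ε : Q ⟶ M) (w : d ≫ ε = 0) :
    cokernel ((resY 𝒳).map d) ⟶ (resY 𝒳).obj M :=
  cokernel.desc _ ((resY 𝒳).map ε) (resY_comp_zero 𝒳 d ε w)

/-- The intermediate extension `ζ^X_M := Im (γ_M)`. -/
def zetaObj {P Q M : RMod Λ} (d : P ⟶ Q) (ε : Q ⟶ M) (w : d ≫ ε = 0) : FunCat 𝒳 :=
  image (gammaMap 𝒳 d ε w)

/-- The unit map `coker(Hom(-,X₁)|_X → Hom(-,X₀)|_X) ⟶ Hom(-, coker(X₁ → X₀))|_X`, i.e.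
the unit `F ⟶ θ_ρ θ (F)` of the adjunction `(θ, θ_ρ)` evaluated on a functor presented by
`d' : X₁ ⟶ X₀`. -/
def unitMap {X₁ X₀ : RMod Λ} (d' : X₁ ⟶ X₀) :
    cokernel ((resY 𝒳).map d') ⟶ (resY 𝒳).obj (cokernel d') :=
  cokernel.desc _ ((resY 𝒳).map (cokernel.π d'))
    (resY_comp_zero 𝒳 d' (cokernel.π d') (cokernel.condition d'))

/-- In `mod-X`, `F` has projective dimension at most one: there is a short exact sequence
`0 → Hom(-,X₁)|_X → Hom(-,X₀)|_X → F → 0` by representable functors (the projective objects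
of `mod-X`). -/
def PdLeOne (F : FunCat 𝒳) : Prop :=
  ∃ (X₁ X₀ : RMod Λ) (_ : X₁ ∈ 𝒳) (_ : X₀ ∈ 𝒳) (a : (resY 𝒳).obj X₁ ⟶ (resY 𝒳).obj X₀)
    (b : (resY 𝒳).obj X₀ ⟶ F) (w : a ≫ b = 0), (ShortComplex.mk a b w).ShortExact

/-- `F` lies in `Ker ℓ_λ`, where `ℓ_λ` is the left adjoint of the inclusion
`ℓ : mod₀-X → mod-X`; equivalently (by adjunction), `F` admits no nonzero morphism to any
object of `mod₀-X`. -/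
def MemKerEllLambda (F : FunCat 𝒳) : Prop :=
  ∀ G : FunCat 𝒳, FinPres 𝒳 G → Vanish0 𝒳 G → ∀ η : F ⟶ G, η = 0

/-- `F` lies in `Ker ℓ_ρ`, where `ℓ_ρ` is the right adjoint of the inclusion
`ℓ : mod₀-X → mod-X`; equivalently (by adjunction), `F` receives no nonzero morphism from
any object of `mod₀-X`. -/
def MemKerEllRho (F : FunCat 𝒳) : Prop :=
  ∀ G : FunCat 𝒳, FinPres 𝒳 G → Vanish0 𝒳 G → ∀ η : G ⟶ F, η = 0

/-- `F` is a projective object of `mod-X`: every epimorphism of `mod-X` onto `F`'s target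
lifts. -/
def ProjRelModX (F : FunCat 𝒳) : Prop :=
  ∀ (G H : FunCat 𝒳), FinPres 𝒳 G → FinPres 𝒳 H → ∀ e : G ⟶ H, Epi e →
    ∀ f : F ⟶ H, ∃ g : F ⟶ G, g ≫ e = f

end FunctorCategory

/-!
Since `Hom(-, ·)|_X` is left exact, `ker γ_M` is the cokernel of `Hom(-, P)|_X → Hom(-, Ω)|_X`
with `Ω = ker ε`, and `coker γ_M` is the cokernel of `Hom(-, ε)|_X`. Both are therefore cokernels
of `Hom(-, f)|_X` for an epimorphism `f : N → N'` of finitely presented modules. Such a functor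
vanishes on projectives, which lift along `f`; and it is finitely presented: a right
`X`-approximation `Y → N'` together with a right `X`-approximation of the pullback `Y ×_{N'} N`
presents it. Right coherence keeps `Ω` and the pullback finitely presented, so that they have
approximations.
-/

section Coherence

variable {R : Type u} [Ring R] {M N : Type u} [AddCommGroup M] [Module R M]
  [AddCommGroup N] [Module R N]

def IsCoherentModule (R M : Type u) [Ring R] [AddCommGroup M] [Module R M] : Prop :=
  ∀ S : Submodule R M, S.FG → Module.FinitePresentation R S

lemma IsCoherentModule.of_equiv (e : M ≃ₗ[R] N) (h : IsCoherentModule R M) :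
    IsCoherentModule R N := fun S hS =>
  have := h (S.map e.symm.toLinearMap) (hS.map _)
  .of_equiv (e.symm.submoduleMap S).symm

lemma IsCoherentModule.prod (hM : IsCoherentModule R M) (hN : IsCoherentModule R N) :
    IsCoherentModule R (M × N) := by
  intro S hS
  have : Module.Finite R S := Module.Finite.iff_fg.mpr hS
  let q := (LinearMap.snd R M N).submoduleMap S
  have hq : Function.Surjective q := LinearMap.submoduleMap_surjective _ _
  have := hN _ (hS.map (LinearMap.snd R M N))
  let j := (LinearMap.fst R M N) ∘ₗ S.subtype ∘ₗ (LinearMap.ker q).subtype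
  have hj : Function.Injective j := by
    rw [injective_iff_map_eq_zero]
    rintro ⟨⟨x, hxS⟩, hxq⟩ hx
    have hsnd : x.2 = 0 := congrArg Subtype.val (LinearMap.mem_ker.mp hxq)
    ext
    · exact hx
    · exact hsnd
  have : Module.Finite R (LinearMap.ker q) :=
    Module.Finite.iff_fg.mpr (Module.FinitePresentation.fg_ker q hq)
  have := hM _ (Module.Finite.iff_fg.mp (Module.Finite.range j))
  have : Module.FinitePresentation R (LinearMap.ker q) :=
    .of_equiv (N := LinearMap.ker q) (LinearEquiv.ofInjective j hj).symm
  exact Module.finitePresentation_of_ker q hq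

lemma IsCoherentModule.of_surjective (h : IsCoherentModule R M) (l : M →ₗ[R] N)
    (hl : Function.Surjective l) (hk : (LinearMap.ker l).FG) : IsCoherentModule R N := by
  intro S hS
  have hker : LinearMap.ker l ≤ S.comap l := fun x hx => by
    simp [LinearMap.mem_ker.mp hx]
  have hS' : (S.comap l).FG := by
    refine Submodule.fg_of_fg_map_of_fg_inf_ker l ?_ ?_
    · rwa [Submodule.map_comap_eq_of_surjective hl]
    · rwa [inf_of_le_right hker]
  have := h _ hS'
  let q : S.comap l →ₗ[R] S := l.restrict fun _ hx => hx
  have hq : Function.Surjective q := by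
    rintro ⟨y, hy⟩
    obtain ⟨x, rfl⟩ := hl y
    exact ⟨⟨x, hy⟩, rfl⟩
  refine Module.finitePresentation_of_surjective q hq ?_
  rw [LinearMap.ker_restrict]
  refine Submodule.fg_of_fg_map_injective _ (S.comap l).injective_subtype ?_
  rwa [Submodule.map_comap_subtype, inf_of_le_right hker]

lemma isCoherentModule_pi_fin (hR : IsCoherentModule R R) :
    ∀ n : ℕ, IsCoherentModule R (Fin n → R)
  | 0 => fun _ _ => inferInstance
  | n + 1 => (hR.prod (isCoherentModule_pi_fin hR n)).of_equiv
      (Fin.consLinearEquiv R fun _ : Fin (n + 1) => R)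

lemma IsCoherentModule.of_finitePresentation (hR : IsCoherentModule R R)
    [Module.FinitePresentation R M] : IsCoherentModule R M := by
  obtain ⟨n, K, e, hK⟩ := Module.FinitePresentation.exists_fin R M
  exact ((isCoherentModule_pi_fin hR n).of_surjective K.mkQ K.mkQ_surjective
    (by rwa [Submodule.ker_mkQ])).of_equiv e.symm

theorem IsCoherentModule.finitePresentation_ker (hR : IsCoherentModule R R)
    [Module.FinitePresentation R M] [Module.FinitePresentation R N] (l : M →ₗ[R] N) :
    Module.FinitePresentation R (LinearMap.ker l) := by
  have := IsCoherentModule.of_finitePresentation hR (M := N) _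
    (Module.Finite.iff_fg.mp (Module.Finite.range l))
  have := Module.FinitePresentation.fg_ker l.rangeRestrict l.surjective_rangeRestrict
  rw [LinearMap.ker_rangeRestrict] at this
  exact IsCoherentModule.of_finitePresentation hR _ this

end Coherence

section Homology

variable {C D : Type*} [Category C] [Abelian C] [Category D] [Abelian D]

def kernelCokernelDescIsoCokernelMapKernelLift (G : C ⥤ D) [G.PreservesZeroMorphisms]
    {P Q M : C} (d : P ⟶ Q) (ε : Q ⟶ M) (w : d ≫ ε = 0)
    [PreservesLimit (parallelPair ε 0) G] (h : G.map d ≫ G.map ε = 0) :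
    kernel (cokernel.desc (G.map d) (G.map ε) h) ≅ cokernel (G.map (kernel.lift ε d w)) :=
  let S := ShortComplex.mk (G.map d) (G.map ε) h
  S.homologyIsoKernelDesc.symm ≪≫ S.homologyIsoCokernelLift ≪≫
    cokernelIsoOfEq (by ext; simp [S]) ≪≫
    cokernelCompIsIso (G.map (kernel.lift ε d w)) (kernelComparison ε G)

def cokernelCokernelDescIso {X Y Z : C} (f : X ⟶ Y) (g : Y ⟶ Z) (w : f ≫ g = 0) :
    cokernel (cokernel.desc f g w) ≅ cokernel g :=
  (cokernelEpiComp (cokernel.π f) _).symm ≪≫ cokernelIsoOfEq (cokernel.π_desc f g w)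

variable {J : Type*} [Category J]

lemma exact_of_exact_evaluation {S : ShortComplex (J ⥤ D)}
    (h : ∀ j, (S.map ((evaluation J D).obj j)).Exact) : S.Exact := by
  rw [ShortComplex.exact_iff_isZero_homology]
  exact Functor.isZero _ fun j => (ShortComplex.exact_iff_isZero_homology _ |>.mp (h j)).of_iso
    (S.mapHomologyIso ((evaluation J D).obj j)).symm

end Homology

lemma finitePresentation_of_projective_of_finite {R : Type u} [Ring R] (P : ModuleCat.{u} R)
    (hP : Projective P) (hPf : Module.Finite R P) : Module.FinitePresentation R P :=
  have := (IsProjective.iff_projective P).mpr hP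
  Module.finitePresentation_of_projective _ _

section RestrictedYoneda

variable {A : Type u} [Ring A] (𝒳 : Set (RMod A))

instance : (resY 𝒳).Additive where
  map_add {_ _ f g} := by
    ext X h
    exact Preadditive.comp_add _ _ _ h f g

instance : PreservesLimitsOfShape WalkingParallelPair (resY 𝒳) :=
  preservesLimitsOfShape_of_evaluation _ _ fun X =>
    show PreservesLimitsOfShape _ (preadditiveCoyoneda.obj (op X.unop.obj)) from inferInstance

variable {𝒳}

lemma FinPres.of_iso {F G : FunCat 𝒳} (hF : FinPres 𝒳 F) (e : F ≅ G) : FinPres 𝒳 G := by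
  obtain ⟨X₁, X₀, h₁, h₀, u, ⟨e'⟩⟩ := hF
  exact ⟨X₁, X₀, h₁, h₀, u, ⟨e.symm ≪≫ e'⟩⟩

lemma Vanish0.of_iso {F G : FunCat 𝒳} (hF : Vanish0 𝒳 F) (e : F ≅ G) : Vanish0 𝒳 G :=
  fun P hP => (hF P hP).of_iso ((evaluation _ _).obj (op P) |>.mapIso e).symm

lemma finPres_of_exact {X₁ X₀ : RMod A} (h₁ : X₁ ∈ 𝒳) (h₀ : X₀ ∈ 𝒳) (u : X₁ ⟶ X₀)
    {F : FunCat 𝒳} (v : (resY 𝒳).obj X₀ ⟶ F) [Epi v] (w : (resY 𝒳).map u ≫ v = 0)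
    (hS : (ShortComplex.mk _ _ w).Exact) : FinPres 𝒳 F :=
  ⟨X₁, X₀, h₁, h₀, u, ⟨hS.gIsCokernel.coconePointUniqueUpToIso (colimit.isColimit _)⟩⟩

lemma exists_comp_eq_of_cokernel_π_app_eq_zero {N N' : RMod A} (f : N ⟶ N')
    {X : (XCat 𝒳)ᵒᵖ} (g : X.unop.obj ⟶ N') (hg : (cokernel.π ((resY 𝒳).map f)).app X g = 0) :
    ∃ h : X.unop.obj ⟶ N, h ≫ f = g := by
  have hS := (ShortComplex.exact_of_g_is_cokernel
    (ShortComplex.mk _ _ (cokernel.condition ((resY 𝒳).map f))) (cokernelIsCokernel _)).map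
    ((evaluation _ AddCommGrpCat).obj X)
  exact (ShortComplex.ab_exact_iff _).mp hS g hg

lemma epi_resY_map_of_approx {Y N : RMod A} (τ : Y ⟶ N)
    (hτ : ∀ X' ∈ 𝒳, ∀ g : X' ⟶ N, ∃ h : X' ⟶ Y, h ≫ τ = g) : Epi ((resY 𝒳).map τ) :=
  have (X : (XCat 𝒳)ᵒᵖ) : Epi (((resY 𝒳).map τ).app X) :=
    (AddCommGrpCat.epi_iff_surjective _).mpr fun g => hτ X.unop.obj X.unop.property g
  NatTrans.epi_of_epi_app _

theorem finPres_cokernel_resY_map (hA : RightCoherent A)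
    (h𝒳 : GoodSub (fun M : RMod A => Module.FinitePresentation Aᵐᵒᵖ M) 𝒳) {N N' : RMod A}
    (f : N ⟶ N') (hN : Module.FinitePresentation Aᵐᵒᵖ N)
    (hN' : Module.FinitePresentation Aᵐᵒᵖ N') : FinPres 𝒳 (cokernel ((resY 𝒳).map f)) := by
  obtain ⟨Y, hY, τ, hτ⟩ := h𝒳.approx N' hN'
  have := h𝒳.mem_mod Y hY
  -- `ker t` is the pullback of `τ` and `f`
  let t := τ.hom ∘ₗ LinearMap.fst _ Y N - f.hom ∘ₗ LinearMap.snd _ Y N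
  obtain ⟨Z, hZ, ρ, hρ⟩ :=
    h𝒳.approx (ModuleCat.of _ (LinearMap.ker t)) (IsCoherentModule.finitePresentation_ker hA t)
  let pY : ModuleCat.of _ (LinearMap.ker t) ⟶ Y :=
    ModuleCat.ofHom (LinearMap.fst _ Y N ∘ₗ (LinearMap.ker t).subtype)
  let pN : ModuleCat.of _ (LinearMap.ker t) ⟶ N :=
    ModuleCat.ofHom (LinearMap.snd _ Y N ∘ₗ (LinearMap.ker t).subtype)
  have hsq : pY ≫ τ = pN ≫ f := by
    ext ⟨x, hx⟩
    exact sub_eq_zero.mp hx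
  have := epi_resY_map_of_approx τ hτ
  refine finPres_of_exact hZ hY (ρ ≫ pY) ((resY 𝒳).map τ ≫ cokernel.π _) ?_
    (exact_of_exact_evaluation fun X => ?_)
  · rw [← Category.assoc, ← Functor.map_comp, Category.assoc, hsq, ← Category.assoc,
      Functor.map_comp, Category.assoc, cokernel.condition, comp_zero]
  · rw [ShortComplex.ab_exact_iff]
    intro g hg
    obtain ⟨h, hh⟩ := exists_comp_eq_of_cokernel_π_app_eq_zero f (g ≫ τ) hg
    let k : X.unop.obj ⟶ ModuleCat.of _ (LinearMap.ker t) :=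
      ModuleCat.ofHom (LinearMap.codRestrict _ (g.hom.prod h.hom) fun x =>
        sub_eq_zero.mpr (ConcreteCategory.congr_hom hh x).symm)
    obtain ⟨z, hz⟩ := hρ _ X.unop.property k
    exact ⟨z, show z ≫ ρ ≫ pY = g by rw [← Category.assoc, hz]; rfl⟩

theorem vanish0_cokernel_resY_map_of_epi {N N' : RMod A} (f : N ⟶ N') [Epi f] :
    Vanish0 𝒳 (cokernel ((resY 𝒳).map f)) := by
  intro P hP
  have : Projective P.obj := hP
  have : Epi (((resY 𝒳).map f).app (op P)) := (AddCommGrpCat.epi_iff_surjective _).mpr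
    fun g => ⟨Projective.factorThru (P := P.obj) g f, Projective.factorThru_comp (P := P.obj) g f⟩
  exact IsZero.of_epi_eq_zero
    (((resY 𝒳).map f).app (op P) ≫ (cokernel.π ((resY 𝒳).map f)).app (op P))
    (by rw [← NatTrans.comp_app, cokernel.condition, NatTrans.app_zero])

end RestrictedYoneda

/-- For a right coherent ring `A` and a contravariantly finite subcategory `X`
of `mod-A` containing the finitely generated projectives, for every `M ∈ mod-A` there is an
exact sequence `0 → K_M → θ_λ(M) → θ_ρ(M) → L_M → 0` in `mod-X` with `K_M, L_M ∈ mod₀-X`,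
where the middle map is the canonical map `γ_M`. -/
theorem statement0 (A : Type u) [Ring A] (hA : RightCoherent A)
    (𝒳 : Set (RMod A))
    (h𝒳 : GoodSub (fun M : RMod A => Module.FinitePresentation Aᵐᵒᵖ M) 𝒳)
    (M : RMod A) (hM : Module.FinitePresentation Aᵐᵒᵖ M)
    (P Q : RMod A) (hP : Projective P) (hPf : Module.Finite Aᵐᵒᵖ P)
    (hQ : Projective Q) (hQf : Module.Finite Aᵐᵒᵖ Q)
    (d : P ⟶ Q) (ε : Q ⟶ M) (w : d ≫ ε = 0)
    (hepi : Epi ε) (hex : (ShortComplex.mk d ε w).Exact) :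
    ∃ (K L : FunCat 𝒳) (a : K ⟶ cokernel ((resY 𝒳).map d))
      (b : (resY 𝒳).obj M ⟶ L)
      (w₁ : a ≫ gammaMap 𝒳 d ε w = 0) (w₂ : gammaMap 𝒳 d ε w ≫ b = 0),
      FinPres 𝒳 K ∧ Vanish0 𝒳 K ∧ FinPres 𝒳 L ∧ Vanish0 𝒳 L ∧
      Mono a ∧ Epi b ∧
      (ShortComplex.mk a (gammaMap 𝒳 d ε w) w₁).Exact ∧
      (ShortComplex.mk (gammaMap 𝒳 d ε w) b w₂).Exact := by
  have hPfp := finitePresentation_of_projective_of_finite P hP hPf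
  have hQfp := finitePresentation_of_projective_of_finite Q hQ hQf
  have hKε : Module.FinitePresentation Aᵐᵒᵖ (kernel ε : RMod A) :=
    have := IsCoherentModule.finitePresentation_ker hA ε.hom
    .of_equiv (ModuleCat.kernelIsoKer ε).toLinearEquiv.symm
  have := hex.epi_kernelLift
  let eK := kernelCokernelDescIsoCokernelMapKernelLift (resY 𝒳) d ε w (resY_comp_zero 𝒳 d ε w)
  let eL := cokernelCokernelDescIso ((resY 𝒳).map d) ((resY 𝒳).map ε) (resY_comp_zero 𝒳 d ε w)
  refine ⟨_, _, kernel.ι _, cokernel.π _, kernel.condition _, cokernel.condition _,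
    (finPres_cokernel_resY_map hA h𝒳 _ hPfp hKε).of_iso eK.symm,
    (vanish0_cokernel_resY_map_of_epi _).of_iso eK.symm,
    (finPres_cokernel_resY_map hA h𝒳 ε hQfp hM).of_iso eL.symm,
    (vanish0_cokernel_resY_map_of_epi ε).of_iso eL.symm,
    inferInstance, inferInstance, ShortComplex.exact_of_f_is_kernel _ (kernelIsKernel _),
    ShortComplex.exact_of_g_is_cokernel _ (cokernelIsCokernel _)⟩

end RelAus
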